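/- Let 0 < α < 1, let F : [0, ∞) → ℝ be continuously differentiable with F(0) ≥ 0, F(u) > 0 and F′(u) ≥ 0 for all u ≥ 0, and let u : [0, T] → [0, ∞) solve the ordinary differential equation u′(t) = F(u(t)) with u(0) = u₀ ≥ 0. Then the function v(t) = u(t^{α}/Γ(α+1)) is a lower solution of the Caputo fractional differential equation ᶜD_{0|t}^{α}w = F(w), w(0) = u₀; that is, (ᶜD_{0|t}^{α}v)(t) ≤ F(v(t)) for all t in the interval where v is defined, and v(0) ≤ u₀. -/

import Mathlib

/-!
Write `g s = s ^ α / Γ(α + 1)`, so that `v = u ∘ g` and `g' s = s ^ (α - 1) / Γ(α)`. By the chain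
rule `v' = (F ∘ v) · g'`, and `F ∘ v` is nondecreasing because `u` and `F` are. Bounding `F (v s)`
by `F (v t)` under the Caputo integral leaves `F (v t)` times the Caputo derivative of `g`, which
is `1` by the Beta integral `∫₀ᵗ s ^ (α - 1) (t - s) ^ (-α) ds = Γ(α) Γ(1 - α)`.
-/

noncomputable section

open Set

/-- Left Caputo fractional derivative
`(ᶜD_{0|t}^{α}ψ)(t) = (1/Γ(1−α)) ∫_0^t (t−s)^{−α} ψ′(s) ds`. -/
def leftCaputo (α : ℝ) (ψ : ℝ → ℝ) (t : ℝ) : ℝ :=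
  (1 / Real.Gamma (1 - α)) * ∫ s in (0:ℝ)..t, (t - s) ^ (-α) * deriv ψ s

theorem integral_rpow_mul_sub_rpow {a b t : ℝ} (ha : 0 < a) (hb : 0 < b) (ht : 0 < t) :
    ∫ s in (0:ℝ)..t, s ^ (a - 1) * (t - s) ^ (b - 1) =
      t ^ (a + b - 1) * (Real.Gamma a * Real.Gamma b / Real.Gamma (a + b)) := by
  have h := Complex.betaIntegral_scaled a b ht
  rw [Complex.betaIntegral_eq_Gamma_mul_div _ _ (by simpa) (by simpa)] at h
  apply Complex.ofReal_injective
  rw [← intervalIntegral.integral_ofReal]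
  convert h using 1
  · refine intervalIntegral.integral_congr fun s hs => ?_
    rw [uIcc_of_le ht.le] at hs
    push_cast [Complex.ofReal_cpow hs.1, Complex.ofReal_cpow (sub_nonneg.2 hs.2)]
    rfl
  · push_cast [Complex.ofReal_cpow ht.le, ← Complex.Gamma_ofReal]
    rfl

theorem intervalIntegrable_rpow_mul_sub_rpow {a b t : ℝ} (ha : 0 < a) (hb : 0 < b)
    (ht : 0 < t) :
    IntervalIntegrable (fun s => s ^ (a - 1) * (t - s) ^ (b - 1)) MeasureTheory.volume 0 t := by
  -- a non-integrable function has integral `0`, and this one has a positive integral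
  refine intervalIntegral.intervalIntegrable_of_integral_ne_zero ?_
  rw [integral_rpow_mul_sub_rpow ha hb ht]
  have := Real.Gamma_pos_of_pos ha
  have := Real.Gamma_pos_of_pos hb
  have := Real.Gamma_pos_of_pos (add_pos ha hb)
  positivity

theorem hasDerivAt_rpow_div_Gamma_add_one {α s : ℝ} (hα : α ≠ 0) (hs : 0 < s) :
    HasDerivAt (fun s => s ^ α / Real.Gamma (α + 1)) (s ^ (α - 1) / Real.Gamma α) s := by
  refine ((Real.hasDerivAt_rpow_const (Or.inl hs.ne')).div_const _).congr_deriv ?_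
  rw [Real.Gamma_add_one hα, mul_div_mul_left _ _ hα]

theorem leftCaputo_le_of_deriv_eq {α t M : ℝ} {ψ φ : ℝ → ℝ} (hα : 0 < α) (hα' : α < 1)
    (ht : 0 < t) (hφ : ContinuousOn φ (Icc 0 t)) (hφM : ∀ s ∈ Icc 0 t, φ s ≤ M)
    (hψ : ∀ s ∈ Ioc 0 t, deriv ψ s = φ s * (s ^ (α - 1) / Real.Gamma α)) :
    leftCaputo α ψ t ≤ M := by
  have hΓ := Real.Gamma_pos_of_pos hα
  have hΓ' := Real.Gamma_pos_of_pos (sub_pos.2 hα')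
  set k : ℝ → ℝ := fun s => s ^ (α - 1) * (t - s) ^ (1 - α - 1)
  have hk_int : IntervalIntegrable k MeasureTheory.volume 0 t :=
    intervalIntegrable_rpow_mul_sub_rpow hα (sub_pos.2 hα') ht
  have hk_val : ∫ s in (0:ℝ)..t, k s = Real.Gamma α * Real.Gamma (1 - α) := by
    rw [integral_rpow_mul_sub_rpow hα (sub_pos.2 hα') ht, add_sub_cancel, sub_self,
      Real.rpow_zero, Real.Gamma_one, div_one, one_mul]
  have hk_nonneg : ∀ s ∈ Icc 0 t, 0 ≤ k s := fun s hs =>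
    mul_nonneg (Real.rpow_nonneg hs.1 _) (Real.rpow_nonneg (sub_nonneg.2 hs.2) _)
  have h_integrand : ∫ s in (0:ℝ)..t, (t - s) ^ (-α) * deriv ψ s =
      ∫ s in (0:ℝ)..t, φ s / Real.Gamma α * k s := by
    simp only [intervalIntegral.integral_of_le ht.le]
    refine MeasureTheory.setIntegral_congr_fun measurableSet_Ioc fun s hs => ?_
    simp only [k, hψ s hs, sub_sub_cancel_left]
    ring
  calc leftCaputo α ψ t
      = 1 / Real.Gamma (1 - α) * ∫ s in (0:ℝ)..t, φ s / Real.Gamma α * k s := by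
        rw [leftCaputo, h_integrand]
    _ ≤ 1 / Real.Gamma (1 - α) * ∫ s in (0:ℝ)..t, M / Real.Gamma α * k s := by
        gcongr
        refine intervalIntegral.integral_mono_on ht.le ?_ (hk_int.const_mul _) fun s hs => ?_
        · exact hk_int.continuousOn_mul ((hφ.div_const _).mono (uIcc_of_le ht.le).subset)
        · gcongr
          exacts [hk_nonneg s hs, hφM s hs]
    _ = M := by
        rw [intervalIntegral.integral_const_mul, hk_val]
        field_simp

theorem caputo_lower_solution_general
    (α : ℝ) (hα : 0 < α) (hα' : α < 1)
    (F : ℝ → ℝ) (hF : ContDiff ℝ 1 F)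
    (hFpos : ∀ w : ℝ, 0 ≤ w → 0 < F w)
    (hF' : ∀ w : ℝ, 0 ≤ w → 0 ≤ deriv F w)
    (T : ℝ) (u₀ : ℝ) (hu₀ : 0 ≤ u₀)
    (u : ℝ → ℝ) (hu : ∀ t ∈ Set.Icc (0:ℝ) T, HasDerivAt u (F (u t)) t)
    (hu0 : u 0 = u₀) (hunn : ∀ t ∈ Set.Icc (0:ℝ) T, 0 ≤ u t) :
    u ((0:ℝ) ^ α / Real.Gamma (α + 1)) ≤ u₀ ∧
    ∀ t : ℝ, 0 ≤ t → t ^ α / Real.Gamma (α + 1) ≤ T →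
      leftCaputo α (fun s => u (s ^ α / Real.Gamma (α + 1))) t ≤
        F (u (t ^ α / Real.Gamma (α + 1))) := by
  have hg_zero : (0:ℝ) ^ α / Real.Gamma (α + 1) = 0 := by rw [Real.zero_rpow hα.ne', zero_div]
  refine ⟨by rw [hg_zero, hu0], fun t ht0 htT => ?_⟩
  rcases ht0.eq_or_lt with rfl | ht
  · simpa [leftCaputo, hg_zero, hu0] using (hFpos u₀ hu₀).le
  set g : ℝ → ℝ := fun s => s ^ α / Real.Gamma (α + 1)
  have hΓ := Real.Gamma_pos_of_pos (add_pos hα one_pos)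
  have hg_mono : MonotoneOn g (Ici 0) := fun x hx y _ hxy => by
    simp only [g]
    gcongr
  have hg_mem : ∀ s ∈ Icc 0 t, g s ∈ Icc 0 T := fun s hs =>
    ⟨div_nonneg (Real.rpow_nonneg hs.1 _) hΓ.le, (hg_mono hs.1 ht0 hs.2).trans htT⟩
  have hu_cont : ContinuousOn u (Icc 0 T) := fun s hs => (hu s hs).continuousAt.continuousWithinAt
  have hu_mono : MonotoneOn u (Icc 0 T) :=
    monotoneOn_of_hasDerivWithinAt_nonneg (convex_Icc 0 T) hu_cont
      (fun s hs => (hu s (interior_subset hs)).hasDerivWithinAt)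
      (fun s hs => (hFpos _ (hunn s (interior_subset hs))).le)
  have hF_mono : MonotoneOn F (Ici 0) :=
    monotoneOn_of_deriv_nonneg (convex_Ici 0) hF.continuous.continuousOn
      (hF.differentiable one_ne_zero).differentiableOn
      (fun w hw => hF' w (interior_Ici.subset hw).le)
  have hv_mono : MonotoneOn (fun s => F (u (g s))) (Icc 0 t) := fun x hx y hy hxy =>
    hF_mono (hunn _ (hg_mem x hx)) (hunn _ (hg_mem y hy))
      (hu_mono (hg_mem x hx) (hg_mem y hy) (hg_mono hx.1 hy.1 hxy))
  refine leftCaputo_le_of_deriv_eq hα hα' ht (φ := fun s => F (u (g s))) ?_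
    (fun s hs => hv_mono hs (right_mem_Icc.2 ht0) hs.2) fun s hs => ?_
  · refine hF.continuous.comp_continuousOn (hu_cont.comp (ContinuousOn.div_const ?_ _) hg_mem)
    exact fun s _ => (Real.continuousAt_rpow_const s α (Or.inr hα.le)).continuousWithinAt
  · exact ((hu _ (hg_mem s (Ioc_subset_Icc_self hs))).comp s
      (hasDerivAt_rpow_div_Gamma_add_one hα.ne' hs.1)).deriv

/-- If `u` solves the ODE `u′ = F(u)`, `u(0) = u₀`, with `F(0) ≥ 0`, `F > 0` and
`F′ ≥ 0` on `[0,∞)`, then `v(t) = u(t^α/Γ(α+1))` is a lower solution of the Caputo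
fractional equation `ᶜD_{0|t}^{α}w = F(w)`, `w(0) = u₀`:
`(ᶜD_{0|t}^{α}v)(t) ≤ F(v(t))` where `v` is defined, and `v(0) ≤ u₀`. -/
theorem caputo_lower_solution
    (α : ℝ) (hα : 0 < α) (hα' : α < 1)
    (F : ℝ → ℝ) (hF : ContDiff ℝ 1 F)
    (hF0 : 0 ≤ F 0) (hFpos : ∀ w : ℝ, 0 ≤ w → 0 < F w)
    (hF' : ∀ w : ℝ, 0 ≤ w → 0 ≤ deriv F w)
    (T : ℝ) (hT : 0 < T) (u₀ : ℝ) (hu₀ : 0 ≤ u₀)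
    (u : ℝ → ℝ) (hu : ∀ t ∈ Set.Icc (0:ℝ) T, HasDerivAt u (F (u t)) t)
    (hu0 : u 0 = u₀) (hunn : ∀ t ∈ Set.Icc (0:ℝ) T, 0 ≤ u t) :
    u ((0:ℝ) ^ α / Real.Gamma (α + 1)) ≤ u₀ ∧
    ∀ t : ℝ, 0 ≤ t → t ^ α / Real.Gamma (α + 1) ≤ T →
      leftCaputo α (fun s => u (s ^ α / Real.Gamma (α + 1))) t ≤
        F (u (t ^ α / Real.Gamma (α + 1))) :=
  caputo_lower_solution_general α hα hα' F hF hFpos hF' T u₀ hu₀ u hu hu0 hunn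

end
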